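/- Let d₁, …, d_k be pairwise distinct, pairwise coprime, squarefree integers, each different from 0 and 1, let K = ℚ(√d₁, …, √d_k), and let p be an odd prime not dividing any dᵢ. Then for every maximal ideal 𝔓 of the ring of integers O_K of K lying over p, the decomposition group of 𝔓 (the stabilizer of 𝔓 under the action of Gal(K/ℚ)) has order at most 2. -/

import Mathlib

/-!
Every `σ ∈ Gal(K/ℚ)` sends `√dᵢ` to `±√dᵢ`, so `σ² = 1`. As `(2√dᵢ)² = 4dᵢ` is prime
to `p`, `2√dᵢ ∉ 𝔓`, hence two automorphisms that agree modulo `𝔓` agree on every `√dᵢ`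
and are equal. So the decomposition group embeds into the involutions of the automorphism
group of the finite field `𝓞 K ⧸ 𝔓`; that group is cyclic, and a cyclic group has at most
two solutions of `x² = 1`.
-/

open NumberField IntermediateField

namespace FiniteField

variable (F : Type*) [Field F] [Finite F]

instance : Finite (F ≃+* F) := Finite.of_injective _ (DFunLike.coe_injective (F := F ≃+* F))

instance : IsCyclic (F ≃+* F) := by
  obtain ⟨p, _⟩ := CharP.exists F
  have : Fact p.Prime := ⟨CharP.char_is_prime F p⟩
  let := ZMod.algebra F p
  let toRingEquivHom : Gal(F/ZMod p) →* (F ≃+* F) :=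
    ⟨⟨AlgEquiv.toRingEquiv, rfl⟩, fun _ _ ↦ rfl⟩
  refine isCyclic_of_surjective toRingEquivHom fun φ ↦
    ⟨.ofRingEquiv (f := φ) fun x ↦ ?_, rfl⟩
  exact congrArg (· x)
    (RingHom.ext_zmod ((φ : F →+* F).comp (algebraMap _ F)) (algebraMap _ F))

theorem card_ringEquiv_sq_eq_one_le_two : Nat.card {φ : F ≃+* F | φ ^ 2 = 1} ≤ 2 := by
  classical
  have := Fintype.ofFinite (F ≃+* F)
  rw [Nat.card_eq_fintype_card, Fintype.card_subtype]
  exact IsCyclic.card_pow_eq_one_le two_pos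

end FiniteField

namespace Ideal

variable {R : Type*} [CommRing R]

theorem intCast_notMem_of_isCoprime {P : Ideal R} (hP : P ≠ ⊤) {p n : ℤ} (hp : (p : R) ∈ P)
    (hpn : IsCoprime p n) : (n : R) ∉ P := by
  obtain ⟨a, b, hab⟩ := hpn
  refine fun hn ↦ hP <| (eq_top_iff_one P).mpr ?_
  have := P.add_mem (P.mul_mem_left a hp) (P.mul_mem_left b hn)
  rwa [← Int.cast_mul, ← Int.cast_mul, ← Int.cast_add, hab, Int.cast_one] at this

theorem card_le_two_of_involutive (P : Ideal R) [P.IsMaximal] [Finite (R ⧸ P)] {G : Type*}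
    (ρ : G → R ≃+* R) {D : Set G} (hstab : ∀ g ∈ D, P.map (ρ g : R →+* R) = P)
    (hinv : ∀ g ∈ D, ∀ x, ρ g (ρ g x) = x)
    (hsep : ∀ g ∈ D, ∀ h ∈ D, (∀ x, ρ g x - ρ h x ∈ P) → g = h) : Nat.card D ≤ 2 := by
  let := Quotient.field P
  let residue (g : D) : (R ⧸ P) ≃+* (R ⧸ P) := quotientEquiv P P (ρ g) (hstab g g.2).symm
  have residue_mk (g : D) (x : R) : residue g (Quotient.mk P x) = Quotient.mk P (ρ g x) :=
    quotientEquiv_mk ..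
  have residue_sq (g : D) : residue g ^ 2 = 1 := by
    ext y
    obtain ⟨x, rfl⟩ := Quotient.mk_surjective y
    rw [sq, RingAut.mul_apply, residue_mk, residue_mk, hinv g g.2, RingAut.one_apply]
  have residue_injective : Function.Injective residue := fun g h hgh ↦ Subtype.ext <|
    hsep g g.2 h h.2 fun x ↦ Quotient.eq.mp <| by rw [← residue_mk, ← residue_mk, hgh]
  calc Nat.card D ≤ Nat.card {φ : (R ⧸ P) ≃+* (R ⧸ P) | φ ^ 2 = 1} :=
        Nat.card_le_card_of_injective (fun g ↦ ⟨residue g, residue_sq g⟩)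
          fun g h hgh ↦ residue_injective (congrArg Subtype.val hgh)
    _ ≤ 2 := FiniteField.card_ringEquiv_sq_eq_one_le_two _

end Ideal

theorem AlgEquiv.apply_eq_or_eq_neg_of_sq_mem_range {R A : Type*} [CommSemiring R] [CommRing A]
    [IsDomain A] [Algebra R A] (σ : A ≃ₐ[R] A) {x : A}
    (hx : x ^ 2 ∈ Set.range (algebraMap R A)) : σ x = x ∨ σ x = -x := by
  obtain ⟨a, ha⟩ := hx
  rw [← sq_eq_sq_iff_eq_or_eq_neg, ← map_pow, ← ha, AlgEquiv.commutes]

namespace Multiquadratic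

variable {E : Type*} [Field E] [CharZero E] {ι : Type*} {d : ι → ℤ} {s : ι → E}
  {K : IntermediateField ℚ E}

theorem mem_of_eq_adjoin (hK : K = adjoin ℚ (Set.range s)) (i : ι) : s i ∈ K :=
  hK ▸ subset_adjoin ℚ _ ⟨i, rfl⟩

def root (hs : ∀ i, s i ^ 2 = d i) (hK : K = adjoin ℚ (Set.range s)) (i : ι) : 𝓞 K :=
  ⟨⟨s i, mem_of_eq_adjoin hK i⟩, IsIntegral.of_pow two_pos <| by
    rw [show (⟨s i, _⟩ : K) ^ 2 = d i from Subtype.ext (hs i)]; exact isIntegral_algebraMap⟩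

@[simp]
theorem coe_root (hs : ∀ i, s i ^ 2 = d i) (hK : K = adjoin ℚ (Set.range s)) (i : ι) :
    ((root hs hK i : K) : E) = s i :=
  rfl

theorem root_sq (hs : ∀ i, s i ^ 2 = d i) (hK : K = adjoin ℚ (Set.range s)) (i : ι) :
    root hs hK i ^ 2 = d i :=
  RingOfIntegers.ext <| Subtype.ext <| hs i

theorem mapRingHom_root_eq_or_eq_neg (hs : ∀ i, s i ^ 2 = d i)
    (hK : K = adjoin ℚ (Set.range s)) (σ : K ≃ₐ[ℚ] K) (i : ι) :
    RingOfIntegers.mapRingHom (σ : K →+* K) (root hs hK i) = root hs hK i ∨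
      RingOfIntegers.mapRingHom (σ : K →+* K) (root hs hK i) = -root hs hK i := by
  simp only [RingOfIntegers.ext_iff, RingOfIntegers.mapRingHom_apply, map_neg]
  exact σ.apply_eq_or_eq_neg_of_sq_mem_range ⟨d i, Subtype.ext <| by simpa using (hs i).symm⟩

theorem algEquiv_ext (hs : ∀ i, s i ^ 2 = d i) (hK : K = adjoin ℚ (Set.range s))
    {σ τ : K ≃ₐ[ℚ] K}
    (h : ∀ i, RingOfIntegers.mapRingHom (σ : K →+* K) (root hs hK i) =
      RingOfIntegers.mapRingHom (τ : K →+* K) (root hs hK i)) : σ = τ := by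
  apply AlgEquiv.coe_toAlgHom_injective
  refine algHom_ext_of_eq_adjoin ℚ hK ?_
  rintro _ ⟨i, rfl⟩
  exact congrArg Subtype.val (h i)

theorem algEquiv_mul_self_eq_one (hs : ∀ i, s i ^ 2 = d i) (hK : K = adjoin ℚ (Set.range s))
    (σ : K ≃ₐ[ℚ] K) : σ * σ = 1 :=
  algEquiv_ext hs hK fun i ↦ by
    change RingOfIntegers.mapRingHom (σ : K →+* K)
      (RingOfIntegers.mapRingHom (σ : K →+* K) (root hs hK i)) = root hs hK i
    rcases mapRingHom_root_eq_or_eq_neg hs hK σ i with h | h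
    · rw [h, h]
    · rw [h, map_neg, h, neg_neg]

theorem algEquiv_eq_of_forall_sub_mem (hs : ∀ i, s i ^ 2 = d i)
    (hK : K = adjoin ℚ (Set.range s)) {P : Ideal (𝓞 K)} [P.IsPrime]
    (hP : ∀ i, ((4 * d i : ℤ) : 𝓞 K) ∉ P) {σ τ : K ≃ₐ[ℚ] K}
    (h : ∀ x, RingOfIntegers.mapRingHom (σ : K →+* K) x -
      RingOfIntegers.mapRingHom (τ : K →+* K) x ∈ P) : σ = τ := by
  refine algEquiv_ext hs hK fun i ↦ ?_
  have two_root_notMem : 2 * root hs hK i ∉ P := fun hmem ↦ hP i <| by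
    rw [Int.cast_mul, ← root_sq hs hK]
    convert P.pow_mem_of_mem hmem 2 two_pos using 1
    push_cast
    ring
  have := h (root hs hK i)
  rcases mapRingHom_root_eq_or_eq_neg hs hK σ i with hσ | hσ <;>
    rcases mapRingHom_root_eq_or_eq_neg hs hK τ i with hτ | hτ <;> rw [hσ, hτ] at this ⊢
  -- `rw` closes the cases of equal signs; otherwise the difference is `±2√dᵢ`
  · exact (two_root_notMem (by convert this using 1; ring)).elim
  · exact (two_root_notMem (by convert P.neg_mem this using 1; ring)).elim

theorem numberField_of_eq_adjoin [Finite ι] (hs : ∀ i, s i ^ 2 = d i)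
    (hK : K = adjoin ℚ (Set.range s)) : NumberField K where
  to_charZero := charZero_of_injective_algebraMap (algebraMap ℚ K).injective
  to_finiteDimensional := by
    have : Finite (Set.range s) := Set.finite_range s
    rw [hK]
    exact finiteDimensional_adjoin <| Set.forall_mem_range.mpr fun i ↦
      IsIntegral.of_pow two_pos <| hs i ▸ isIntegral_intCast (R := ℚ) (d i)

end Multiquadratic

theorem polyquadratic_decomposition_group_card_le_two_general
    (k : ℕ) (d : Fin k → ℤ)
    (s : Fin k → ℂ) (hs : ∀ i, s i ^ 2 = (d i : ℂ))
    (K : IntermediateField ℚ ℂ) (hK : K = IntermediateField.adjoin ℚ (Set.range s))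
    (p : ℕ) (hp : p.Prime) (hp2 : p ≠ 2)
    (hpd : ∀ i, ¬ (p : ℤ) ∣ d i)
    (𝔓 : Ideal (𝓞 K)) (hmax : 𝔓.IsMaximal) (hover : (p : 𝓞 K) ∈ 𝔓) :
    Nat.card {σ : K ≃ₐ[ℚ] K |
        Ideal.map (RingOfIntegers.mapRingHom (σ : K ≃ₐ[ℚ] K)) 𝔓 = 𝔓} ≤ 2 := by
  have : NumberField K := Multiquadratic.numberField_of_eq_adjoin hs hK
  have hp_not_dvd (i : Fin k) : ¬ (p : ℤ) ∣ 4 * d i := by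
    rw [(Nat.prime_iff_prime_int.mp hp).dvd_mul, not_or]
    refine ⟨fun h ↦ hp2 ?_, hpd i⟩
    have : p ∣ 2 ^ 2 := by exact_mod_cast h
    exact (Nat.prime_dvd_prime_iff_eq hp Nat.prime_two).mp (hp.dvd_of_dvd_pow this)
  have h4d (i : Fin k) : ((4 * d i : ℤ) : 𝓞 K) ∉ 𝔓 :=
    Ideal.intCast_notMem_of_isCoprime hmax.ne_top (p := p) (by exact_mod_cast hover)
      ((Nat.prime_iff_prime_int.mp hp).coprime_iff_not_dvd.mpr (hp_not_dvd i))
  refine Ideal.card_le_two_of_involutive 𝔓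
    (fun σ : K ≃ₐ[ℚ] K ↦ RingOfIntegers.mapRingEquiv σ) (fun σ hσ ↦ hσ)
    (fun σ _ x ↦ RingOfIntegers.ext <|
      DFunLike.congr_fun (Multiquadratic.algEquiv_mul_self_eq_one hs hK σ) (x : K))
    (fun σ _ τ _ h ↦ Multiquadratic.algEquiv_eq_of_forall_sub_mem hs hK h4d (σ := σ) (τ := τ) h)

/-- Let `d₁, …, d_k` be pairwise distinct, pairwise coprime, squarefree integers, each
different from `0` and `1`, let `K = ℚ(√d₁, …, √d_k) ⊆ ℂ`, and let `p` be an odd prime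
dividing none of the `dᵢ`.  Then for every maximal ideal `𝔓` of the ring of integers of
`K` lying over `p`, the decomposition group of `𝔓`, i.e. the stabilizer of `𝔓` under the
action of `Gal(K/ℚ)`, has order at most `2`. -/
theorem polyquadratic_decomposition_group_card_le_two
    (k : ℕ) (d : Fin k → ℤ)
    (hdist : Function.Injective d)
    (hcop : ∀ i j, i ≠ j → IsCoprime (d i) (d j))
    (hsf : ∀ i, Squarefree (d i))
    (h0 : ∀ i, d i ≠ 0) (h1 : ∀ i, d i ≠ 1)
    (s : Fin k → ℂ) (hs : ∀ i, s i ^ 2 = (d i : ℂ))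
    (K : IntermediateField ℚ ℂ) (hK : K = IntermediateField.adjoin ℚ (Set.range s))
    (p : ℕ) (hp : p.Prime) (hp2 : p ≠ 2)
    (hpd : ∀ i, ¬ (p : ℤ) ∣ d i)
    (𝔓 : Ideal (𝓞 K)) (hmax : 𝔓.IsMaximal) (hover : (p : 𝓞 K) ∈ 𝔓) :
    Nat.card {σ : K ≃ₐ[ℚ] K |
        Ideal.map (RingOfIntegers.mapRingHom (σ : K ≃ₐ[ℚ] K)) 𝔓 = 𝔓} ≤ 2 :=
  polyquadratic_decomposition_group_card_le_two_general k d s hs K hK p hp hp2 hpd 𝔓 hmax hover
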